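/- Hivert's quasisymmetric transpositions satisfy the braid relation: s̃_i s̃_{i+1} s̃_i = s̃_{i+1} s̃_i s̃_{i+1} as operations on weak compositions. -/

import Mathlib

/-!
Write `s₁, s₂` for the quasisymmetric transpositions at positions `a b` and `b c`. If at least
two of the three entries vanish, every step on either side of the braid relation is a genuine
swap, so the relation follows from the braid relation of transpositions. Otherwise at most one
entry is zero, and a direct computation shows that both sides perform the same swaps, or both
undo every swap they perform.
-/

/-- Hivert's quasisymmetric transposition on weak compositions: exchange entries
`i` and `i+1` if at least one of them is zero, otherwise do nothing.
(For `i` out of range it acts as the identity.) -/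
def qswapAt (n i : ℕ) (α : Fin n → ℕ) : Fin n → ℕ :=
  if h : i + 1 < n then
    (if α ⟨i, by omega⟩ = 0 ∨ α ⟨i + 1, h⟩ = 0 then
      α ∘ Equiv.swap (⟨i, by omega⟩ : Fin n) ⟨i + 1, h⟩
    else α)
  else α

open Equiv

theorem Equiv.swap_braid {α : Type*} [DecidableEq α] {a b c : α}
    (hab : a ≠ b) (hbc : b ≠ c) (hac : a ≠ c) :
    swap a b * swap b c * swap a b = swap b c * swap a b * swap b c :=
  calc swap a b * swap b c * swap a b = swap b a * swap c b * swap b a := by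
        rw [swap_comm a b, swap_comm b c]
    _ = swap c a := by rw [swap_mul_swap_mul_swap hbc.symm hac.symm, swap_comm]
    _ = swap b c * swap a b * swap b c := (swap_mul_swap_mul_swap hab hac).symm

section

variable {ι M : Type*} [DecidableEq ι] [Zero M] [DecidableEq M]

def qswap (a b : ι) (β : ι → M) : ι → M :=
  if β a = 0 ∨ β b = 0 then β ∘ swap a b else β

variable {a b c : ι} {β : ι → M}

theorem qswap_of_left_eq_zero (h : β a = 0) : qswap a b β = β ∘ swap a b :=
  if_pos (Or.inl h)

theorem qswap_of_right_eq_zero (h : β b = 0) : qswap a b β = β ∘ swap a b :=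
  if_pos (Or.inr h)

theorem qswap_of_ne_zero (ha : β a ≠ 0) (hb : β b ≠ 0) : qswap a b β = β :=
  if_neg (by simp [ha, hb])

theorem qswap_braid_of_ne (hab : a ≠ b) (hbc : b ≠ c) (hac : a ≠ c) (β : ι → M) :
    qswap a b (qswap b c (qswap a b β)) = qswap b c (qswap a b (qswap b c β)) := by
  have braid : (fun x ↦ β (swap a b (swap b c (swap a b x))))
      = fun x ↦ β (swap b c (swap a b (swap b c x))) := by
    funext x
    simpa only [Perm.mul_apply] using congrArg (fun σ : Perm ι ↦ β (σ x)) (swap_braid hab hbc hac)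
  by_cases ha : β a = 0 <;> by_cases hb : β b = 0 <;> by_cases hc : β c = 0 <;>
    simp [qswap_of_left_eq_zero, qswap_of_right_eq_zero, qswap_of_ne_zero, swap_apply_of_ne_of_ne,
      ha, hb, hc, hab, hac, hbc.symm, hac.symm, Function.comp_def]
  all_goals exact braid

end

theorem qswapAt_eq_qswap {n i : ℕ} (h : i + 1 < n) (α : Fin n → ℕ) :
    qswapAt n i α = qswap ⟨i, by omega⟩ ⟨i + 1, h⟩ α := by
  rw [qswapAt, dif_pos h, qswap]

/-- Hivert's quasisymmetric transpositions satisfy the braid relation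
`s̃ᵢ s̃ᵢ₊₁ s̃ᵢ = s̃ᵢ₊₁ s̃ᵢ s̃ᵢ₊₁` as operations on weak compositions. -/
theorem qswap_braid (n i : ℕ) (hi : i + 2 < n) (α : Fin n → ℕ) :
    qswapAt n i (qswapAt n (i + 1) (qswapAt n i α))
      = qswapAt n (i + 1) (qswapAt n i (qswapAt n (i + 1) α)) := by
  simp only [qswapAt_eq_qswap (show i + 1 < n by omega), qswapAt_eq_qswap hi]
  apply qswap_braid_of_ne <;> simp only [ne_eq, Fin.mk.injEq] <;> omega
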